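/- arXiv:1806.04785 — 6 statements merged into one kernel-verified Lean document; each statement's English description precedes it below -/
import Mathlib

section
/- Let 0 < q < 1 be a real number and N a positive integer. Then ∑_{m=1}^{N} (-1)^{m-1} q^{m(m+1)/2} / [m]_q · C_q(N,m) = ∑_{n=1}^{N} q^n / [n]_q, where [m]_q = (1-q^m)/(1-q) and C_q(N,m) is the q-binomial coefficient. -/
noncomputable def qint (q : ℝ) (m : ℕ) : ℝ := (1 - q ^ m) / (1 - q)

noncomputable def qfact (q : ℝ) (m : ℕ) : ℝ := ∏ a ∈ Finset.Icc 1 m, qint q a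

noncomputable def qbinom (q : ℝ) (N m : ℕ) : ℝ := qfact q N / (qfact q m * qfact q (N - m))

/-!
Induction on `N`. By the q-Pascal rule `C_q(N+1,m) = C_q(N,m) + q^(N+1-m) C_q(N,m-1)` and
`[m]_q C_q(N+1,m) = [N+1]_q C_q(N,m-1)`, the left side grows by `q^(N+1)/[N+1]_q` times
`∑_{m ≥ 1} (-1)^(m-1) q^(m(m-1)/2) C_q(N+1,m)`, and this alternating sum is `1`: it telescopes
under the other q-Pascal rule `C_q(N+1,m) = q^m C_q(N,m) + C_q(N,m-1)`.
-/

open Finset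

variable {q : ℝ}

lemma qint_ne_zero (hq0 : 0 ≤ q) (hq1 : q ≠ 1) {m : ℕ} (hm : m ≠ 0) : qint q m ≠ 0 := by
  have hpow : 1 - q ^ m ≠ 0 :=
    sub_ne_zero.mpr fun h => hq1 ((pow_eq_one_iff_of_nonneg hq0 hm).mp h.symm)
  exact div_ne_zero hpow (sub_ne_zero.mpr hq1.symm)

lemma qint_add (hq1 : q ≠ 1) (a b : ℕ) : qint q (a + b) = qint q a + q ^ a * qint q b := by
  have : 1 - q ≠ 0 := sub_ne_zero.mpr hq1.symm
  unfold qint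
  field_simp
  ring

lemma qfact_zero : qfact q 0 = 1 := by simp [qfact]

lemma qfact_succ (m : ℕ) : qfact q (m + 1) = qfact q m * qint q (m + 1) :=
  prod_Icc_succ_top (by omega) _

lemma qfact_ne_zero (hq0 : 0 ≤ q) (hq1 : q ≠ 1) (m : ℕ) : qfact q m ≠ 0 :=
  prod_ne_zero_iff.mpr fun a ha => qint_ne_zero hq0 hq1 (by grind)

lemma qbinom_zero_right (hq0 : 0 ≤ q) (hq1 : q ≠ 1) (N : ℕ) : qbinom q N 0 = 1 := by
  simpa [qbinom, qfact_zero] using div_self (qfact_ne_zero hq0 hq1 N)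

lemma qbinom_self (hq0 : 0 ≤ q) (hq1 : q ≠ 1) (N : ℕ) : qbinom q N N = 1 := by
  simpa [qbinom, qfact_zero] using div_self (qfact_ne_zero hq0 hq1 N)

lemma qbinom_succ_succ (hq0 : 0 ≤ q) (hq1 : q ≠ 1) {N k : ℕ} (hk : k < N) :
    qbinom q (N + 1) (k + 1) = qbinom q N (k + 1) + q ^ (N - k) * qbinom q N k := by
  obtain ⟨r, rfl⟩ : ∃ r, N = k + 1 + r := ⟨N - (k + 1), by omega⟩
  unfold qbinom
  rw [show k + 1 + r + 1 - (k + 1) = r + 1 by omega, show k + 1 + r - (k + 1) = r by omega,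
    show k + 1 + r - k = r + 1 by omega, qfact_succ (k + 1 + r), qfact_succ r, qfact_succ k,
    show k + 1 + r + 1 = (r + 1) + (k + 1) by ring, qint_add hq1]
  have := qfact_ne_zero hq0 hq1 k
  have := qfact_ne_zero hq0 hq1 r
  have := qint_ne_zero hq0 hq1 k.succ_ne_zero
  have := qint_ne_zero hq0 hq1 r.succ_ne_zero
  field_simp

lemma qbinom_succ_succ' (hq0 : 0 ≤ q) (hq1 : q ≠ 1) {N k : ℕ} (hk : k < N) :
    qbinom q (N + 1) (k + 1) = q ^ (k + 1) * qbinom q N (k + 1) + qbinom q N k := by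
  obtain ⟨r, rfl⟩ : ∃ r, N = k + 1 + r := ⟨N - (k + 1), by omega⟩
  unfold qbinom
  rw [show k + 1 + r + 1 - (k + 1) = r + 1 by omega, show k + 1 + r - (k + 1) = r by omega,
    show k + 1 + r - k = r + 1 by omega, qfact_succ (k + 1 + r), qfact_succ r, qfact_succ k,
    show k + 1 + r + 1 = (k + 1) + (r + 1) by ring, qint_add hq1]
  have := qfact_ne_zero hq0 hq1 k
  have := qfact_ne_zero hq0 hq1 r
  have := qint_ne_zero hq0 hq1 k.succ_ne_zero
  have := qint_ne_zero hq0 hq1 r.succ_ne_zero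
  field_simp
  ring

lemma qint_mul_qbinom_succ_succ (hq0 : 0 ≤ q) (hq1 : q ≠ 1) {N k : ℕ} (hk : k ≤ N) :
    qint q (k + 1) * qbinom q (N + 1) (k + 1) = qint q (N + 1) * qbinom q N k := by
  obtain ⟨r, rfl⟩ : ∃ r, N = k + r := ⟨N - k, by omega⟩
  unfold qbinom
  rw [show k + r + 1 - (k + 1) = r by omega, Nat.add_sub_cancel_left, qfact_succ (k + r),
    qfact_succ k]
  have := qfact_ne_zero hq0 hq1 k
  have := qfact_ne_zero hq0 hq1 r
  have := qint_ne_zero hq0 hq1 k.succ_ne_zero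
  field_simp

lemma triangle_succ' (k : ℕ) : (k + 1) * (k + 1 + 1) / 2 = k * (k + 1) / 2 + (k + 1) := by
  simpa [mul_comm] using Nat.triangle_succ (k + 1)

/- The q-binomial theorem `∏_{i<n} (1 + q^i x) = ∑_k q^{k(k-1)/2} C_q(n,k) x^k` at `x = -1` and
`n = N + 1`, reindexed by `k ↦ k + 1` with the term `k = 0` moved to the right. -/
lemma sum_range_neg_one_pow_mul_qbinom_succ (hq0 : 0 ≤ q) (hq1 : q ≠ 1) (N : ℕ) :
    ∑ k ∈ range (N + 1), (-1) ^ k * q ^ (k * (k + 1) / 2) * qbinom q (N + 1) (k + 1) = 1 := by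
  set g : ℕ → ℝ := fun k => (-1) ^ k * q ^ (k * (k + 1) / 2) * qbinom q N k
  have htelescope : ∀ k ∈ range N,
      (-1) ^ k * q ^ (k * (k + 1) / 2) * qbinom q (N + 1) (k + 1) = g k - g (k + 1) := by
    intro k hk
    simp only [g, qbinom_succ_succ' hq0 hq1 (mem_range.mp hk), triangle_succ', pow_add, pow_succ]
    ring
  rw [sum_range_succ, sum_congr rfl htelescope, sum_range_sub']
  simp [g, qbinom_self hq0 hq1, qbinom_zero_right hq0 hq1]

lemma sum_range_succ_vanHamme (hq0 : 0 ≤ q) (hq1 : q ≠ 1) (N : ℕ) :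
    ∑ k ∈ range (N + 1),
        (-1) ^ k * q ^ ((k + 1) * (k + 1 + 1) / 2) / qint q (k + 1) * qbinom q (N + 1) (k + 1) =
      ∑ k ∈ range N,
        (-1) ^ k * q ^ ((k + 1) * (k + 1 + 1) / 2) / qint q (k + 1) * qbinom q N (k + 1) +
      q ^ (N + 1) / qint q (N + 1) := by
  set c : ℕ → ℝ := fun k => (-1) ^ k * q ^ ((k + 1) * (k + 1 + 1) / 2) / qint q (k + 1)
  have hpascal : ∀ k ∈ range N, c k * qbinom q (N + 1) (k + 1) =
      c k * qbinom q N (k + 1) + c k * (q ^ (N - k) * qbinom q N k) := by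
    intro k hk
    rw [qbinom_succ_succ hq0 hq1 (mem_range.mp hk), mul_add]
  have htop : c N * qbinom q (N + 1) (N + 1) = c N * (q ^ (N - N) * qbinom q N N) := by
    simp [qbinom_self hq0 hq1]
  have hratio : ∀ k ∈ range (N + 1), c k * (q ^ (N - k) * qbinom q N k) =
      q ^ (N + 1) / qint q (N + 1) *
        ((-1) ^ k * q ^ (k * (k + 1) / 2) * qbinom q (N + 1) (k + 1)) := by
    intro k hk
    have hkN : k ≤ N := Nat.lt_succ_iff.mp (mem_range.mp hk)
    have hk1 := qint_ne_zero hq0 hq1 k.succ_ne_zero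
    have hN1 := qint_ne_zero hq0 hq1 N.succ_ne_zero
    have hpow : q ^ ((k + 1) * (k + 1 + 1) / 2) * q ^ (N - k) =
        q ^ (k * (k + 1) / 2) * q ^ (N + 1) := by
      rw [← pow_add, ← pow_add, triangle_succ']
      congr 1
      omega
    rw [eq_div_of_mul_eq hk1 ((mul_comm _ _).trans (qint_mul_qbinom_succ_succ hq0 hq1 hkN))]
    simp only [c]
    field_simp
    linear_combination qbinom q N k * hpow
  calc ∑ k ∈ range (N + 1), c k * qbinom q (N + 1) (k + 1)
      = ∑ k ∈ range N, c k * qbinom q N (k + 1) +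
          ∑ k ∈ range (N + 1), c k * (q ^ (N - k) * qbinom q N k) := by
        rw [sum_range_succ, sum_congr rfl hpascal, sum_add_distrib, sum_range_succ _ N, htop,
          add_assoc]
    _ = _ := by
        rw [sum_congr rfl hratio, ← mul_sum, sum_range_neg_one_pow_mul_qbinom_succ hq0 hq1,
          mul_one]

theorem vanHamme_q_euler_general (q : ℝ) (hq0 : 0 < q) (hq1 : q < 1) (N : ℕ) :
    ∑ m ∈ Finset.Icc 1 N,
        (-1 : ℝ) ^ (m - 1) * q ^ (m * (m + 1) / 2) / qint q m * qbinom q N m =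
      ∑ n ∈ Finset.Icc 1 N, q ^ n / qint q n := by
  rw [← Ico_add_one_right_eq_Icc, sum_Ico_eq_sum_range, sum_Ico_eq_sum_range]
  simp only [add_comm 1, Nat.add_sub_cancel]
  induction N with
  | zero => simp
  | succ N ih => rw [sum_range_succ_vanHamme hq0.le hq1.ne, ih, sum_range_succ]

theorem vanHamme_q_euler (q : ℝ) (hq0 : 0 < q) (hq1 : q < 1) (N : ℕ) (hN : 0 < N) :
    ∑ m ∈ Finset.Icc 1 N,
        (-1 : ℝ) ^ (m - 1) * q ^ (m * (m + 1) / 2) / qint q m * qbinom q N m =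
      ∑ n ∈ Finset.Icc 1 N, q ^ n / qint q n :=
  vanHamme_q_euler_general q hq0 hq1 N
end

section
/- (Hoffman's duality identity) Let N be a positive integer, k = (k_1,...,k_r) an index (tuple of positive integers) and k^∨ = (l_1,...,l_s) its Hoffman dual. Then ∑_{1 ≤ m_1 ≤ ... ≤ m_r ≤ N} (-1)^{m_r - 1} C(N, m_r) / (m_1^{k_1} ··· m_r^{k_r}) = ∑_{1 ≤ n_1 ≤ ... ≤ n_s ≤ N} 1/(n_1^{l_1} ··· n_s^{l_s}). -/
/-!
Write `W(f; k) = ∑_{1 ≤ m₁ ≤ ⋯ ≤ m_r ≤ N} f(m_r) / (m₁^{k₁} ⋯ m_r^{k_r})`, so that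
`H^⋆_N(k) = W(f_N; k)` with `f_N(m) = (-1)^{m-1} C(N, m)` and `ζ^⋆_N(l) = W(1; l)`. Then
`W(f; (q, a+1)) = W(f(m)/m; (q, a))` and `W(f; (q, 1)) = W(tail f; q)` with
`tail f (b) = ∑_{b ≤ t ≤ N} f(t)/t`, and Hoffman duality exchanges these two moves: raising the
last entry of `k` appends a `1` to `k^∨`, and vice versa. Call `ψ` a binomial transform of `φ` when
`φ(m) = (-1)^{m-1} ∑_n C(n-1, m-1) ψ(n)`. By the hockey-stick identity `1` is one of `f_N`, and
if `ψ` is one of `φ`, then `tail ψ` is one of `φ(m)/m` and `ψ(n)/n` one of `tail φ`. Induction on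
the weight then gives `W(φ; k) = W(ψ; k^∨)` for every such pair, the base case `k = k^∨ = (1)`
being `tail φ(1) = tail ψ(1)`.
-/

/-- Weakly increasing tuples `1 ≤ m 0 ≤ ⋯ ≤ m (r-1) ≤ N`. -/
def wchains (r N : ℕ) : Finset (Fin r → ℕ) :=
  (Fintype.piFinset fun _ => Finset.Icc 1 N).filter fun m => ∀ i j : Fin r, i ≤ j → m i ≤ m j

/-- The set of partial sums `k_1, k_1+k_2, …, k_1+⋯+k_{r-1}` of a list. -/
def psums (k : List ℕ) : Finset ℕ :=
  ((List.range (k.length - 1)).map (fun j => (k.take (j + 1)).sum)).toFinset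

/-- `l` is the Hoffman dual of the index `k`. -/
def IsHoffmanDual (k l : List ℕ) : Prop :=
  k ≠ [] ∧ l ≠ [] ∧ (∀ x ∈ k, 0 < x) ∧ (∀ x ∈ l, 0 < x) ∧ k.sum = l.sum ∧
    psums l = Finset.Icc 1 (k.sum - 1) \ psums k

/-- Star multiple harmonic sum `ζ_N^⋆(k)`. -/
def zetaStar (N : ℕ) (k : List ℕ) : ℚ :=
  ∑ m ∈ wchains k.length N, ∏ i : Fin k.length, (1 : ℚ) / (m i : ℚ) ^ k.get i

/-- The sum `H_N^⋆(k)`. -/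
def Hstar (N : ℕ) (k : List ℕ) : ℚ :=
  if h : 0 < k.length then
    ∑ m ∈ wchains k.length N,
      (-1 : ℚ) ^ (m ⟨k.length - 1, by omega⟩ - 1) * (N.choose (m ⟨k.length - 1, by omega⟩)) *
        ∏ i : Fin k.length, (1 : ℚ) / (m i : ℚ) ^ k.get i
  else 1

open Finset

def chainsFrom (b r N : ℕ) : Finset (Fin r → ℕ) :=
  (Fintype.piFinset fun _ => Icc b N).filter fun m => ∀ i j : Fin r, i ≤ j → m i ≤ m j

lemma cons_mem_chainsFrom {b r N t : ℕ} {m : Fin r → ℕ} :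
    (Fin.cons t m : Fin (r + 1) → ℕ) ∈ chainsFrom b (r + 1) N ↔
      t ∈ Icc b N ∧ m ∈ chainsFrom t r N := by
  simp only [chainsFrom, mem_filter, Fintype.mem_piFinset, mem_Icc, Fin.forall_fin_succ,
    Fin.cons_zero, Fin.cons_succ, Fin.succ_le_succ_iff, Fin.zero_le, le_refl, forall_const,
    true_and, Fin.le_zero_iff, Fin.succ_ne_zero, false_imp_iff]
  grind

lemma sum_chainsFrom_succ {M : Type*} [AddCommMonoid M] (b r N : ℕ)
    (F : (Fin (r + 1) → ℕ) → M) :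
    ∑ m ∈ chainsFrom b (r + 1) N, F m =
      ∑ t ∈ Icc b N, ∑ m ∈ chainsFrom t r N, F (Fin.cons t m) := by
  rw [sum_sigma']
  refine sum_nbij' (fun m => ⟨m 0, Fin.tail m⟩) (fun p => Fin.cons p.1 p.2) ?_ ?_ ?_ ?_ ?_
  · intro m hm
    rw [← Fin.cons_self_tail m, cons_mem_chainsFrom] at hm
    exact mem_sigma.2 hm
  · rintro ⟨t, m⟩ h
    exact cons_mem_chainsFrom.2 (mem_sigma.1 h)
  · simp
  · simp
  · simp

/-- `weightedZetaStar N f k b = ∑_{b ≤ m₁ ≤ ⋯ ≤ m_r ≤ N} f(m_r) / (m₁^{k₁} ⋯ m_r^{k_r})`.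
For `k = []` the chain is read as ending at `m_r = b`, which makes `weightedZetaStar_append_one`
hold for `q = []` as well. -/
def weightedZetaStar (N : ℕ) (f : ℕ → ℚ) : List ℕ → ℕ → ℚ
  | [], b => f b
  | a :: k, b => ∑ t ∈ Icc b N, weightedZetaStar N f k t / (t : ℚ) ^ a

lemma sum_chainsFrom_eq_weightedZetaStar (N : ℕ) (f : ℕ → ℚ) (a : ℕ) (k : List ℕ) (b : ℕ) :
    ∑ m ∈ chainsFrom b (k.length + 1) N,
        f (m (Fin.last _)) * ∏ i, (1 : ℚ) / (m i : ℚ) ^ (a :: k).get i =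
      weightedZetaStar N f (a :: k) b := by
  induction k generalizing a b with
  | nil =>
    rw [sum_chainsFrom_succ]
    simp [chainsFrom, weightedZetaStar, div_eq_mul_inv]
  | cons c k ih =>
    rw [sum_chainsFrom_succ, weightedZetaStar]
    refine sum_congr rfl fun t _ => ?_
    rw [← ih c t, sum_div]
    refine sum_congr rfl fun m _ => ?_
    rw [Fin.prod_univ_succ]
    simp only [List.length_cons, ← Fin.succ_last, Fin.cons_zero, Fin.cons_succ, List.get_eq_getElem,
      Fin.val_succ, List.getElem_cons_succ, Fin.val_zero, List.getElem_cons_zero]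
    ring

lemma Hstar_cons (N a : ℕ) (k : List ℕ) :
    Hstar N (a :: k) =
      weightedZetaStar N (fun m => (-1) ^ (m - 1) * N.choose m) (a :: k) 1 := by
  rw [← sum_chainsFrom_eq_weightedZetaStar]
  -- `⟨(a :: k).length - 1, _⟩` is `Fin.last k.length` by computation
  rfl

lemma zetaStar_cons (N a : ℕ) (k : List ℕ) :
    zetaStar N (a :: k) = weightedZetaStar N 1 (a :: k) 1 := by
  rw [← sum_chainsFrom_eq_weightedZetaStar]
  exact sum_congr rfl fun _ _ => (one_mul _).symm

def tailSum (N : ℕ) (f : ℕ → ℚ) (b : ℕ) : ℚ := ∑ t ∈ Icc b N, f t / t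

lemma weightedZetaStar_append_succ (N : ℕ) (f : ℕ → ℚ) (q : List ℕ) (a b : ℕ) :
    weightedZetaStar N f (q ++ [a + 1]) b = weightedZetaStar N (fun t => f t / t) (q ++ [a]) b := by
  induction q generalizing b with
  | nil =>
    refine sum_congr rfl fun t _ => ?_
    rw [weightedZetaStar, weightedZetaStar, pow_succ', div_div]
  | cons c q ih => simp only [List.cons_append, weightedZetaStar, ih]

lemma weightedZetaStar_append_one (N : ℕ) (f : ℕ → ℚ) (q : List ℕ) (b : ℕ) :
    weightedZetaStar N f (q ++ [1]) b = weightedZetaStar N (tailSum N f) q b := by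
  induction q generalizing b with
  | nil => simp [weightedZetaStar, tailSum]
  | cons c q ih => simp only [List.cons_append, weightedZetaStar, ih]

lemma sum_Icc_sum_Icc_comm {M : Type*} [AddCommMonoid M] (a N : ℕ) (F : ℕ → ℕ → M) :
    ∑ j ∈ Icc a N, ∑ n ∈ Icc j N, F j n = ∑ n ∈ Icc a N, ∑ j ∈ Icc a n, F j n :=
  sum_comm' fun j n => by simp only [mem_Icc]; omega

lemma sum_Icc_choose_sub_one (M m : ℕ) (hm : 0 < m) :
    ∑ n ∈ Icc 1 M, (n - 1).choose (m - 1) = M.choose m := by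
  obtain ⟨m, rfl⟩ := Nat.exists_eq_add_one_of_ne_zero hm.ne'
  rw [Nat.add_sub_cancel]
  induction M with
  | zero => simp
  | succ M ih =>
    rw [sum_Icc_succ_top (by omega), ih, Nat.add_sub_cancel, Nat.choose_succ_succ', add_comm]

lemma choose_div_eq_choose_sub_one_div {K : Type*} [Field K] [CharZero K] {n m : ℕ}
    (hn : 0 < n) (hm : 0 < m) :
    (n.choose m : K) / n = ((n - 1).choose (m - 1) : K) / m := by
  obtain ⟨n, rfl⟩ := Nat.exists_eq_add_one_of_ne_zero hn.ne'
  obtain ⟨m, rfl⟩ := Nat.exists_eq_add_one_of_ne_zero hm.ne'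
  rw [div_eq_div_iff (Nat.cast_ne_zero.2 n.succ_ne_zero) (Nat.cast_ne_zero.2 m.succ_ne_zero),
    Nat.add_sub_cancel, Nat.add_sub_cancel]
  exact_mod_cast (Nat.add_one_mul_choose_eq n m).symm.trans (mul_comm _ _)

lemma sum_Icc_neg_one_pow_mul_choose {R : Type*} [CommRing R] {m n N : ℕ}
    (hm : 0 < m) (hn : 0 < n) (hnN : n ≤ N) (hmN : m ≤ N) :
    ∑ M ∈ Icc m N, (-1 : R) ^ (M - 1) * n.choose M = (-1) ^ (m - 1) * (n - 1).choose (m - 1) := by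
  obtain ⟨n, rfl⟩ := Nat.exists_eq_add_one_of_ne_zero hn.ne'
  set g : ℕ → R := fun M => (-1) ^ M * n.choose (M - 1)
  have hstep : ∀ M ∈ Icc m N, (-1 : R) ^ (M - 1) * (n + 1).choose M = g (M + 1) - g M := by
    intro M hM
    obtain ⟨M, rfl⟩ := Nat.exists_eq_add_one_of_ne_zero (by grind : M ≠ 0)
    simp only [g, Nat.add_sub_cancel, Nat.choose_succ_succ', pow_succ]
    push_cast
    ring
  have htop : g (N + 1) = 0 := by simp [g, Nat.choose_eq_zero_of_lt (by omega : n < N)]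
  rw [sum_congr rfl hstep, sum_Icc_sub hmN, htop, Nat.add_sub_cancel]
  obtain ⟨m, rfl⟩ := Nat.exists_eq_add_one_of_ne_zero hm.ne'
  simp [g, pow_succ]

def IsBinomialTransform (N : ℕ) (φ ψ : ℕ → ℚ) : Prop :=
  ∀ m ∈ Icc 1 N, φ m = (-1) ^ (m - 1) * ∑ n ∈ Icc 1 N, ((n - 1).choose (m - 1) : ℚ) * ψ n

namespace IsBinomialTransform

lemma neg_one_pow_mul_choose (N : ℕ) :
    IsBinomialTransform N (fun m => (-1) ^ (m - 1) * N.choose m) 1 := by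
  intro m hm
  simp only [Pi.one_apply, mul_one]
  rw [← Nat.cast_sum, sum_Icc_choose_sub_one N m (mem_Icc.1 hm).1]

variable {N : ℕ} {φ ψ : ℕ → ℚ}

lemma div_tailSum (h : IsBinomialTransform N φ ψ) :
    IsBinomialTransform N (fun m => φ m / m) (tailSum N ψ) := by
  intro m hm
  have hm1 := (mem_Icc.1 hm).1
  calc φ m / m
      = (-1) ^ (m - 1) * ∑ n ∈ Icc 1 N, ((n - 1).choose (m - 1) : ℚ) / m * ψ n := by
        rw [h m hm, mul_div_assoc, sum_div]
        exact congrArg _ (sum_congr rfl fun n _ => by ring)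
    _ = (-1) ^ (m - 1) *
          ∑ n ∈ Icc 1 N, ∑ j ∈ Icc 1 n, ((j - 1).choose (m - 1) : ℚ) * (ψ n / n) := by
        refine congrArg _ (sum_congr rfl fun n hn => ?_)
        rw [← sum_mul, ← Nat.cast_sum, sum_Icc_choose_sub_one n m hm1,
          ← choose_div_eq_choose_sub_one_div (mem_Icc.1 hn).1 hm1]
        ring
    _ = (-1) ^ (m - 1) * ∑ j ∈ Icc 1 N, ((j - 1).choose (m - 1) : ℚ) * tailSum N ψ j := by
        rw [← sum_Icc_sum_Icc_comm]
        simp only [tailSum, mul_sum]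

lemma tailSum_div (h : IsBinomialTransform N φ ψ) :
    IsBinomialTransform N (tailSum N φ) (fun n => ψ n / n) := by
  intro m hm
  obtain ⟨hm1, hmN⟩ := mem_Icc.1 hm
  calc tailSum N φ m
      = ∑ M ∈ Icc m N, ∑ n ∈ Icc 1 N, (-1) ^ (M - 1) * (n.choose M : ℚ) * (ψ n / n) := by
        refine sum_congr rfl fun M hM => ?_
        obtain ⟨hmM, hMN⟩ := mem_Icc.1 hM
        rw [h M (mem_Icc.2 ⟨hm1.trans hmM, hMN⟩), mul_div_assoc, sum_div, mul_sum]
        refine sum_congr rfl fun n hn => ?_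
        rw [mul_div_right_comm, ← choose_div_eq_choose_sub_one_div (mem_Icc.1 hn).1 (hm1.trans hmM)]
        ring
    _ = ∑ n ∈ Icc 1 N, (-1) ^ (m - 1) * ((n - 1).choose (m - 1) : ℚ) * (ψ n / n) := by
        rw [sum_comm]
        refine sum_congr rfl fun n hn => ?_
        rw [← sum_mul, sum_Icc_neg_one_pow_mul_choose hm1 (mem_Icc.1 hn).1 (mem_Icc.1 hn).2 hmN]
    _ = _ := by simp only [mul_sum, mul_assoc]

lemma tailSum_one_eq (h : IsBinomialTransform N φ ψ) : tailSum N φ 1 = tailSum N ψ 1 := by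
  rcases Nat.eq_zero_or_pos N with rfl | hN
  · simp [tailSum]
  · simpa [tailSum] using h.tailSum_div 1 (mem_Icc.2 ⟨le_rfl, hN⟩)

end IsBinomialTransform

lemma psums_singleton (a : ℕ) : psums [a] = ∅ := by
  simp [psums]

lemma psums_append_singleton {q : List ℕ} (hq : q ≠ []) (a : ℕ) :
    psums (q ++ [a]) = insert q.sum (psums q) := by
  have hlen := List.length_pos_iff.2 hq
  ext y
  simp only [psums, List.mem_toFinset, List.mem_map, List.mem_range, mem_insert,
    List.length_append, List.length_singleton, Nat.add_sub_cancel]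
  constructor
  · rintro ⟨j, hj, rfl⟩
    rcases Nat.lt_or_ge j (q.length - 1) with hlt | hge
    · exact Or.inr ⟨j, hlt, by rw [List.take_append_of_le_length (by omega)]⟩
    · left
      rw [show j + 1 = q.length by omega, List.take_left]
  · rintro (rfl | ⟨j, hj, rfl⟩)
    · exact ⟨q.length - 1, by omega, by rw [Nat.sub_add_cancel hlen, List.take_left]⟩
    · exact ⟨j, by omega, by rw [List.take_append_of_le_length (by omega)]⟩

lemma psums_append_singleton_congr (q : List ℕ) (a b : ℕ) :
    psums (q ++ [a]) = psums (q ++ [b]) := by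
  rcases eq_or_ne q [] with rfl | hq
  · simp [psums_singleton]
  · rw [psums_append_singleton hq, psums_append_singleton hq]

lemma psums_subset_Icc {q : List ℕ} (hq : ∀ x ∈ q, 0 < x) : psums q ⊆ Icc 1 (q.sum - 1) := by
  induction q using List.reverseRecOn with
  | nil => simp [psums]
  | append_singleton q a ih =>
    rcases eq_or_ne q [] with rfl | hq'
    · simp [psums_singleton]
    have hpos : 0 < q.sum := List.sum_pos q (fun x hx => hq x (by simp [hx])) hq'
    have ha : 0 < a := hq a (by simp)
    rw [psums_append_singleton hq', insert_subset_iff]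
    refine ⟨mem_Icc.2 ⟨hpos, by simp only [List.sum_append, List.sum_singleton]; omega⟩, ?_⟩
    refine (ih fun x hx => hq x (by simp [hx])).trans (Icc_subset_Icc le_rfl ?_)
    simp only [List.sum_append, List.sum_singleton]
    omega

lemma sum_sub_one_mem_psums_iff {q : List ℕ} {a : ℕ} (hq : ∀ x ∈ q, 0 < x) (ha : 0 < a) :
    (q ++ [a]).sum - 1 ∈ psums (q ++ [a]) ↔ q ≠ [] ∧ a = 1 := by
  rcases eq_or_ne q [] with rfl | hq'
  · simp [psums_singleton]
  rw [psums_append_singleton hq', mem_insert, List.sum_append, List.sum_singleton]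
  constructor
  · rintro (h | h)
    · exact ⟨hq', by omega⟩
    · have := mem_Icc.1 (psums_subset_Icc hq h)
      omega
  · rintro ⟨-, rfl⟩
    exact Or.inl rfl

lemma Icc_sdiff_erase (n : ℕ) (S : Finset ℕ) : (Icc 1 n \ S).erase n = Icc 1 (n - 1) \ S := by
  have hIco : Ico 1 n = Icc 1 (n - 1) := by
    ext y
    simp only [mem_Ico, mem_Icc]
    omega
  rw [← erase_sdiff_comm, Icc_erase_right, hIco]

namespace IsHoffmanDual

variable {q l : List ℕ}

lemma eq_singleton_one (h : IsHoffmanDual [1] l) : l = [1] := by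
  obtain ⟨-, hl, -, hl', hsum, -⟩ := h
  obtain ⟨c, p, rfl⟩ := List.exists_cons_of_ne_nil hl
  have hc : 0 < c := hl' c (by simp)
  have hp : p = [] := by
    by_contra hp
    have := List.sum_pos p (fun x hx => hl' x (by simp [hx])) hp
    simp only [List.sum_cons, List.sum_nil] at hsum
    omega
  subst hp
  simp only [List.sum_cons, List.sum_nil, add_zero] at hsum
  rw [← hsum]

lemma append_succ {a : ℕ} (h : IsHoffmanDual (q ++ [a + 1]) l) (ha : 0 < a) :
    ∃ p, l = p ++ [1] ∧ IsHoffmanDual (q ++ [a]) p := by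
  obtain ⟨-, hl, hk, hl', hsum, hps⟩ := h
  obtain ⟨p, c, rfl⟩ := (List.eq_nil_or_concat' l).resolve_left hl
  have hq : ∀ x ∈ q, 0 < x := fun x hx => hk x (by simp [hx])
  have hp : ∀ x ∈ p, 0 < x := fun x hx => hl' x (by simp [hx])
  have htop : (p ++ [c]).sum - 1 ∈ psums (p ++ [c]) := by
    rw [hps, ← hsum, mem_sdiff, sum_sub_one_mem_psums_iff hq (by omega), mem_Icc]
    refine ⟨⟨?_, le_rfl⟩, fun h => absurd h.2 (by omega)⟩
    simp only [List.sum_append, List.sum_singleton]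
    omega
  obtain ⟨hpne, rfl⟩ := (sum_sub_one_mem_psums_iff hp (hl' c (by simp))).1 htop
  have hsum' : p.sum = (q ++ [a]).sum := by
    simp only [List.sum_append, List.sum_singleton] at hsum ⊢
    omega
  refine ⟨p, rfl, by simp, hpne, fun x hx => ?_, hp, hsum'.symm, ?_⟩
  · simp only [List.mem_append, List.mem_singleton] at hx
    rcases hx with hx | rfl
    exacts [hq x hx, ha]
  have hnot : p.sum ∉ psums p := fun hmem => by
    have := mem_Icc.1 (psums_subset_Icc hp hmem)
    omega
  rw [← erase_insert hnot, ← psums_append_singleton hpne, hps, psums_append_singleton_congr q _ a,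
    hsum', show (q ++ [a + 1]).sum - 1 = (q ++ [a]).sum by simp, Icc_sdiff_erase]

lemma append_one (h : IsHoffmanDual (q ++ [1]) l) (hq : q ≠ []) :
    ∃ p b, l = p ++ [b + 1] ∧ IsHoffmanDual q (p ++ [b]) := by
  obtain ⟨-, hl, hk, hl', hsum, hps⟩ := h
  obtain ⟨p, c, rfl⟩ := (List.eq_nil_or_concat' l).resolve_left hl
  have hqpos : ∀ x ∈ q, 0 < x := fun x hx => hk x (by simp [hx])
  have hp : ∀ x ∈ p, 0 < x := fun x hx => hl' x (by simp [hx])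
  have hc : 0 < c := hl' c (by simp)
  have hqsum : 0 < q.sum := List.sum_pos q hqpos hq
  have htop : ¬(p ≠ [] ∧ c = 1) := by
    rw [← sum_sub_one_mem_psums_iff hp hc, hps, ← hsum, mem_sdiff,
      sum_sub_one_mem_psums_iff hqpos one_pos]
    simp [hq]
  obtain ⟨b, rfl⟩ : ∃ b, c = b + 1 + 1 := by
    refine ⟨c - 2, ?_⟩
    rcases eq_or_ne p [] with rfl | hpne
    · simp only [List.sum_append, List.sum_singleton, List.nil_append] at hsum
      omega
    · have : c ≠ 1 := fun hc1 => htop ⟨hpne, hc1⟩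
      omega
  refine ⟨p, b + 1, rfl, hq, by simp, hqpos, fun x hx => ?_, ?_, ?_⟩
  · simp only [List.mem_append, List.mem_singleton] at hx
    rcases hx with hx | rfl
    exacts [hp x hx, Nat.succ_pos b]
  · simp only [List.sum_append, List.sum_singleton] at hsum ⊢
    omega
  have hqs : (q ++ [1]).sum - 1 = q.sum := by simp
  rw [psums_append_singleton_congr p _ (b + 1 + 1), hps, psums_append_singleton hq, sdiff_insert,
    hqs, Icc_sdiff_erase]

end IsHoffmanDual

theorem IsBinomialTransform.weightedZetaStar_eq {N : ℕ} {φ ψ : ℕ → ℚ}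
    (hφψ : IsBinomialTransform N φ ψ) {k l : List ℕ} (h : IsHoffmanDual k l) :
    weightedZetaStar N φ k 1 = weightedZetaStar N ψ l 1 := by
  induction hw : k.sum using Nat.strong_induction_on generalizing k l φ ψ with
  | _ w ih =>
  obtain ⟨q, a, rfl⟩ := (List.eq_nil_or_concat' k).resolve_left h.1
  rcases Nat.lt_or_ge a 2 with ha | ha
  · obtain rfl : a = 1 := by
      have := h.2.2.1 a (by simp)
      omega
    rcases eq_or_ne q [] with rfl | hq
    · rw [h.eq_singleton_one]
      simpa [weightedZetaStar, tailSum] using hφψ.tailSum_one_eq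
    obtain ⟨p, b, rfl, h'⟩ := h.append_one hq
    rw [weightedZetaStar_append_one, weightedZetaStar_append_succ]
    refine ih _ ?_ hφψ.tailSum_div h' rfl
    simp only [List.sum_append, List.sum_singleton] at hw ⊢
    omega
  · obtain ⟨a, rfl⟩ := Nat.exists_eq_add_of_le' ha
    obtain ⟨p, rfl, h'⟩ := h.append_succ (Nat.succ_pos a)
    rw [weightedZetaStar_append_succ, weightedZetaStar_append_one]
    refine ih _ ?_ hφψ.div_tailSum h' rfl
    simp only [List.sum_append, List.sum_singleton] at hw ⊢
    omega

theorem hoffman_duality_general (N : ℕ) (k l : List ℕ) (h : IsHoffmanDual k l) :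
    Hstar N k = zetaStar N l := by
  obtain ⟨a, k, rfl⟩ := List.exists_cons_of_ne_nil h.1
  obtain ⟨c, l, rfl⟩ := List.exists_cons_of_ne_nil h.2.1
  rw [Hstar_cons, zetaStar_cons]
  exact (IsBinomialTransform.neg_one_pow_mul_choose N).weightedZetaStar_eq h

theorem hoffman_duality (N : ℕ) (hN : 0 < N) (k l : List ℕ) (h : IsHoffmanDual k l) :
    Hstar N k = zetaStar N l :=
  hoffman_duality_general N k l h
end

section
/- For any odd prime p and any positive integer m with m < p, the congruence (-1)^{m-1} C(p-1, m) ≡ -1 - ∑_{m ≤ n ≤ p-1} p/n + p/m (mod p²) holds, where the fractions p/n are interpreted via inverses modulo p². -/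
/-!
Write `ε = p`, so that `ε² = 0` in `ZMod (p ^ 2)`. From `C(p-1, k+1) (k+1) = C(p-1, k) (p-1-k)`
one gets `(-1)^m C(p-1, m) = ∏_{k=1}^m (1 - ε/k) = 1 - ε ∑_{k=1}^m 1/k`. For odd `p` the terms
`ε/k` and `ε/(p-k)` of `∑_{k=1}^{p-1} ε/k` cancel, since their sum is `ε²/(k(p-k)) = 0`; so
`-∑_{k=1}^m ε/k = ∑_{k=m}^{p-1} ε/k - ε/m`.
-/

open Finset

namespace ZMod

variable {p : ℕ}

lemma natCast_mul_self_eq_zero : (p : ZMod (p ^ 2)) * p = 0 := by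
  rw [← Nat.cast_mul, ← sq, natCast_self]

lemma natCast_mul_inv_eq_one_of_lt_prime (hp : p.Prime) (n : ℕ) {k : ℕ} (hk0 : k ≠ 0)
    (hkp : k < p) : (k : ZMod (p ^ n)) * (k : ZMod (p ^ n))⁻¹ = 1 :=
  coe_mul_inv_eq_one k ((Nat.coprime_of_lt_prime hk0 hkp hp).symm.pow_right n)

lemma natCast_mul_inv_add_natCast_mul_inv_sub_eq_zero (hp : p.Prime) {k : ℕ} (hk0 : k ≠ 0)
    (hkp : k < p) :
    (p : ZMod (p ^ 2)) * (k : ZMod (p ^ 2))⁻¹ + p * ((p - k : ℕ) : ZMod (p ^ 2))⁻¹ = 0 := by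
  have hk := natCast_mul_inv_eq_one_of_lt_prime hp 2 hk0 hkp
  have hpk := natCast_mul_inv_eq_one_of_lt_prime hp 2 (k := p - k) (by omega) (by omega)
  rw [Nat.cast_sub hkp.le] at hpk ⊢
  linear_combination (k : ZMod (p ^ 2))⁻¹ * ((p : ZMod (p ^ 2)) - k)⁻¹ * natCast_mul_self_eq_zero
    - p * (k : ZMod (p ^ 2))⁻¹ * hpk - p * ((p : ZMod (p ^ 2)) - k)⁻¹ * hk

lemma sum_Ico_one_natCast_mul_inv_eq_zero (hp : p.Prime) (hp2 : p ≠ 2) :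
    ∑ k ∈ Ico 1 p, (p : ZMod (p ^ 2)) * (k : ZMod (p ^ 2))⁻¹ = 0 := by
  obtain ⟨r, hr⟩ := hp.odd_of_ne_two hp2
  refine sum_involution (fun k _ ↦ p - k) (fun k hk ↦ ?_) (fun k hk _ ↦ ?_)
    (fun k hk ↦ ?_) (fun k hk ↦ ?_) <;> rw [mem_Ico] at hk
  · exact natCast_mul_inv_add_natCast_mul_inv_sub_eq_zero hp (by omega) (by omega)
  · omega
  · rw [mem_Ico]; omega
  · omega

lemma neg_one_pow_mul_choose_pred (hp : p.Prime) {m : ℕ} (hmp : m < p) :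
    (-1 : ZMod (p ^ 2)) ^ m * ((p - 1).choose m : ZMod (p ^ 2)) =
      1 - ∑ k ∈ Icc 1 m, (p : ZMod (p ^ 2)) * (k : ZMod (p ^ 2))⁻¹ := by
  induction m with
  | zero => simp
  | succ m ih =>
    have hrec : ((p - 1).choose (m + 1) * (m + 1 : ℕ) : ZMod (p ^ 2)) =
        (p - 1).choose m * (p - (m + 1 : ℕ)) := by
      rw [← Nat.cast_sub hmp.le, ← Nat.cast_mul, ← Nat.cast_mul, Nat.choose_succ_right_eq,
        Nat.sub_sub, add_comm 1 m]
    have hunit := natCast_mul_inv_eq_one_of_lt_prime hp 2 (k := m + 1) (by omega) hmp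
    have hsq :
        (p : ZMod (p ^ 2)) * ∑ k ∈ Icc 1 m, (p : ZMod (p ^ 2)) * (k : ZMod (p ^ 2))⁻¹ = 0 := by
      simp only [mul_sum, ← mul_assoc, natCast_mul_self_eq_zero, zero_mul, sum_const_zero]
    rw [sum_Icc_succ_top (by omega), pow_succ (-1 : ZMod (p ^ 2)) m]
    linear_combination (-(-1 : ZMod (p ^ 2)) ^ m * ((m + 1 : ℕ) : ZMod (p ^ 2))⁻¹) * hrec
      + (1 - p * ((m + 1 : ℕ) : ZMod (p ^ 2))⁻¹) * ih (by omega)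
      + (-1 : ZMod (p ^ 2)) ^ m * ((p - 1).choose (m + 1) + (p - 1).choose m) * hunit
      + ((m + 1 : ℕ) : ZMod (p ^ 2))⁻¹ * hsq

end ZMod

theorem binom_congruence_mod_p_sq (p : ℕ) (hp : p.Prime) (hp2 : p ≠ 2)
    (m : ℕ) (hm : 0 < m) (hmp : m < p) :
    ((-1 : ZMod (p ^ 2)) ^ (m - 1) * ((p - 1).choose m : ZMod (p ^ 2))) =
      -1 - (∑ n ∈ Finset.Icc m (p - 1), (p : ZMod (p ^ 2)) * (n : ZMod (p ^ 2))⁻¹) +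
        (p : ZMod (p ^ 2)) * (m : ZMod (p ^ 2))⁻¹ := by
  set g : ℕ → ZMod (p ^ 2) := fun n ↦ (p : ZMod (p ^ 2)) * (n : ZMod (p ^ 2))⁻¹
  have hsign : (-1 : ZMod (p ^ 2)) ^ m = -(-1) ^ (m - 1) := by
    conv_lhs => rw [← Nat.sub_add_cancel hm, pow_succ, mul_neg_one]
  have hchoose := ZMod.neg_one_pow_mul_choose_pred hp hmp
  have hzero : ∑ k ∈ Ico 1 p, g k = 0 := ZMod.sum_Ico_one_natCast_mul_inv_eq_zero hp hp2
  have hsplit := sum_Ico_consecutive g hm hmp.le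
  have htop := sum_Ico_succ_top hm g
  have hIcc : Icc m (p - 1) = Ico m p := by ext; simp only [mem_Icc, mem_Ico]; omega
  rw [hsign] at hchoose
  rw [Ico_add_one_right_eq_Icc] at htop
  rw [hIcc]
  linear_combination -hchoose + htop + hsplit + hzero
end

section
/- For any odd prime p and any positive integer m with m < p, the congruence (-1)^{m-1} C(p-1,m) ≡ -1 - (∑_{m ≤ n ≤ p-1} 1/n - 1/m)·p - (∑_{m ≤ n₁ ≤ n₂ ≤ p-1} 1/(n₁n₂) - (1/m)∑_{m ≤ n ≤ p-1} 1/n)·p² (mod p³) holds, where inverses are taken modulo p³. -/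
/-!
With `ε = p`, the identity `(p-1)! / m! = (p-1 choose m) · (p-1-m)!` reads
`(-1)^(p-1-m) · (p-1 choose m) · ∏_{m<n<p} (1 - ε/n) = 1`.
Since `ε³ = 0` in `ℤ/p³`, each factor `1 - ε/n` has inverse `1 + ε/n + ε²/n²`, and expanding
the product of these inverses up to `ε²` gives the first two complete homogeneous sums of the
`1/n`, `m < n < p`. Splitting off the terms with index `m` turns them into the sums over `[m, p-1]`
of the statement.
-/

open Finset

section CommRing

variable {R : Type*} [CommRing R]

theorem choose_mul_prod_Ioc_sub {N m : ℕ} (h : m ≤ N) :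
    (N.choose m : R) * ∏ n ∈ Ioc m N, ((N + 1 : R) - n) = ∏ n ∈ Ioc m N, (n : R) := by
  induction h using Nat.decreasingInduction with
  | self => simp
  | of_succ k hk ih =>
    have hchoose := congrArg (Nat.cast : ℕ → R) (Nat.choose_succ_right_eq N k)
    rw [← prod_Ioc_consecutive _ k.le_succ hk, ← prod_Ioc_consecutive _ k.le_succ hk,
      Nat.Ioc_succ_singleton, prod_singleton, prod_singleton, ← ih]
    push_cast [hk.le] at hchoose ⊢
    linear_combination (-∏ n ∈ Ioc (k + 1) N, ((N + 1 : R) - n)) * hchoose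

theorem neg_one_pow_mul_choose_mul_prod_Ioc {N m : ℕ} (h : m ≤ N) (u : ℕ → R)
    (hu : ∀ n ∈ Ioc m N, (n : R) * u n = 1) :
    (-1) ^ (N - m) * (N.choose m : R) * ∏ n ∈ Ioc m N, (1 - (N + 1 : R) * u n) = 1 := by
  have hfactor : ∀ n ∈ Ioc m N, ((N + 1 : R) - n) * u n = -1 * (1 - (N + 1 : R) * u n) :=
    fun n hn => by linear_combination -hu n hn
  calc (-1) ^ (N - m) * (N.choose m : R) * ∏ n ∈ Ioc m N, (1 - (N + 1 : R) * u n)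
      = (N.choose m : R) * (∏ n ∈ Ioc m N, ((N + 1 : R) - n)) * ∏ n ∈ Ioc m N, u n := by
        rw [mul_assoc (N.choose m : R), ← prod_mul_distrib, prod_congr rfl hfactor,
          prod_mul_distrib, prod_const, Nat.card_Ioc]
        ring
    _ = ∏ n ∈ Ioc m N, ((n : R) * u n) := by rw [choose_mul_prod_Ioc_sub h, prod_mul_distrib]
    _ = 1 := prod_eq_one hu

theorem prod_Ioc_one_add_add_sq {ε : R} (hε : ε ^ 3 = 0) (x : ℕ → R) {a b : ℕ} (hab : a ≤ b) :
    ∏ n ∈ Ioc a b, (1 + ε * x n + ε ^ 2 * x n ^ 2) =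
      1 + ε * ∑ n ∈ Ioc a b, x n + ε ^ 2 * ∑ j ∈ Ioc a b, ∑ i ∈ Ioc a j, x i * x j := by
  induction b, hab using Nat.le_induction with
  | base => simp
  | succ b hab ih =>
    rw [prod_Ioc_succ_top hab, sum_Ioc_succ_top hab, sum_Ioc_succ_top hab,
      sum_Ioc_succ_top hab, ← sum_mul, ih]
    linear_combination x (b + 1) * (x (b + 1) * ∑ n ∈ Ioc a b, x n +
      (1 + ε * x (b + 1)) * ∑ j ∈ Ioc a b, ∑ i ∈ Ioc a j, x i * x j) * hε

theorem neg_one_pow_mul_choose_eq_of_pow_three_eq_zero {N m : ℕ} (h : m ≤ N)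
    (hN : (N + 1 : R) ^ 3 = 0) (u : ℕ → R) (hu : ∀ n ∈ Ioc m N, (n : R) * u n = 1) :
    (-1) ^ (N - m) * (N.choose m : R) =
      1 + (N + 1 : R) * ∑ n ∈ Ioc m N, u n +
        (N + 1 : R) ^ 2 * ∑ j ∈ Ioc m N, ∑ i ∈ Ioc m j, u i * u j := by
  have hinv : (∏ n ∈ Ioc m N, (1 - (N + 1 : R) * u n)) *
      ∏ n ∈ Ioc m N, (1 + (N + 1 : R) * u n + (N + 1 : R) ^ 2 * u n ^ 2) = 1 := by
    rw [← prod_mul_distrib]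
    exact prod_eq_one fun n _ => by linear_combination (-u n ^ 3) * hN
  rw [← prod_Ioc_one_add_add_sq hN u h]
  linear_combination (-(-1) ^ (N - m) * (N.choose m : R)) * hinv +
    (∏ n ∈ Ioc m N, (1 + (N + 1 : R) * u n + (N + 1 : R) ^ 2 * u n ^ 2)) *
      neg_one_pow_mul_choose_mul_prod_Ioc h u hu

theorem sum_Icc_sum_Icc_mul_sub {m N : ℕ} (h : m ≤ N) (x : ℕ → R) :
    ∑ j ∈ Icc m N, ∑ i ∈ Icc m j, x i * x j - x m * ∑ j ∈ Icc m N, x j =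
      ∑ j ∈ Ioc m N, ∑ i ∈ Ioc m j, x i * x j := by
  rw [sum_congr rfl fun j hj => (add_sum_Ioc_eq_sum_Icc (mem_Icc.1 hj).1).symm, sum_add_distrib,
    ← mul_sum, Icc_eq_cons_Ioc h, sum_cons, sum_cons, Ioc_self, sum_empty]
  ring

end CommRing

theorem neg_one_pow_sub_one_eq_neg {R : Type*} [Ring R] {m N : ℕ} (hm : 0 < m) (hmN : m ≤ N)
    (hN : Even N) : (-1 : R) ^ (m - 1) = -(-1) ^ (N - m) := by
  rcases Nat.even_or_odd (N - m) with h | h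
  · have : Odd (m - 1) := by
      rw [Nat.even_iff] at h hN; rw [Nat.odd_iff]; omega
    rw [this.neg_one_pow, h.neg_one_pow]
  · have : Even (m - 1) := by
      rw [Nat.odd_iff] at h; rw [Nat.even_iff] at hN ⊢; omega
    rw [this.neg_one_pow, h.neg_one_pow, neg_neg]

theorem binom_congruence_mod_p_cube (p : ℕ) (hp : p.Prime) (hp2 : p ≠ 2)
    (m : ℕ) (hm : 0 < m) (hmp : m < p) :
    ((-1 : ZMod (p ^ 3)) ^ (m - 1) * ((p - 1).choose m : ZMod (p ^ 3))) =
      -1 -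
        ((∑ n ∈ Finset.Icc m (p - 1), (n : ZMod (p ^ 3))⁻¹) - (m : ZMod (p ^ 3))⁻¹) * p -
        ((∑ n₂ ∈ Finset.Icc m (p - 1), ∑ n₁ ∈ Finset.Icc m n₂,
            (n₁ : ZMod (p ^ 3))⁻¹ * (n₂ : ZMod (p ^ 3))⁻¹) -
          (m : ZMod (p ^ 3))⁻¹ * ∑ n ∈ Finset.Icc m (p - 1), (n : ZMod (p ^ 3))⁻¹) * (p : ZMod (p ^ 3)) ^ 2 := by
  obtain ⟨N, rfl⟩ : ∃ N, p = N + 1 := ⟨p - 1, by omega⟩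
  have hmN : m ≤ N := by omega
  have hN : Even N := by
    have := Nat.odd_iff.mp (hp.odd_of_ne_two hp2)
    rw [Nat.even_iff]; omega
  have hcube : (N + 1 : ZMod ((N + 1) ^ 3)) ^ 3 = 0 := by
    exact_mod_cast ZMod.natCast_self ((N + 1) ^ 3)
  have hunit : ∀ n ∈ Ioc m N, (n : ZMod ((N + 1) ^ 3)) * (n : ZMod ((N + 1) ^ 3))⁻¹ = 1 :=
    fun n hn => ZMod.coe_mul_inv_eq_one n <| Nat.Coprime.pow_right 3 <|
      (Nat.coprime_of_lt_prime (by grind) (by grind) hp).symm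
  have key := neg_one_pow_mul_choose_eq_of_pow_three_eq_zero hmN hcube _ hunit
  rw [Nat.add_sub_cancel, neg_one_pow_sub_one_eq_neg hm hmN hN, sum_Icc_sum_Icc_mul_sub hmN,
    ← add_sum_Ioc_eq_sum_Icc hmN]
  push_cast
  linear_combination -key
end

section
/- (Antipode-type relation for multiple harmonic sums) For any positive integer N and any index (k_1,...,k_r), the identity ∑_{j=0}^{r} (-1)^j ζ_N(k_j,...,k_1) · ζ_N^⋆(k_{j+1},...,k_r) = 0 holds, where ζ_N(l_1,...,l_m) := ∑_{1 ≤ n_1 < ... < n_m ≤ N} 1/(n_1^{l_1}···n_m^{l_m}) and ζ_N^⋆(l_1,...,l_m) := ∑_{1 ≤ n_1 ≤ ... ≤ n_m ≤ N} 1/(n_1^{l_1}···n_m^{l_m}), with ζ_N(∅) = ζ_N^⋆(∅) := 1. -/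
/-- Strictly increasing tuples `1 ≤ m 0 < ⋯ < m (r-1) ≤ N`. -/
def schains (r N : ℕ) : Finset (Fin r → ℕ) :=
  (Fintype.piFinset fun _ => Finset.Icc 1 N).filter fun m => ∀ i j : Fin r, i < j → m i < m j

/-- Multiple harmonic sum `ζ_N(k)` (strict inequalities); `ζ_N(∅) = 1`. -/
def zeta (N : ℕ) (k : List ℕ) : ℚ :=
  ∑ m ∈ schains k.length N, ∏ i : Fin k.length, (1 : ℚ) / (m i : ℚ) ^ k.get i

/-!
Peel every harmonic sum at its smallest variable. In
`ζ_N(k_j, …, k_1) · ζ_N^⋆(k_{j+1}, …, k_r)` the smallest variables carry `k_j` and `k_{j+1}`;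
comparing them writes the product as `V_j + V_{j+1}`, where `V_j` sums over the valleys
`x_1 > ⋯ > x_j ≤ x_{j+1} ≤ ⋯ ≤ x_r` (`x_i` carrying `k_i`). The end terms are
`ζ_N^⋆(k_1, …, k_r) = V_1` and `ζ_N(k_r, …, k_1) = V_r`, so the alternating sum telescopes to `0`.
-/

open Finset

/- Gap `s = 1` gives the strict chains of `schains`, `s = 0` the weak chains of `wchains`; the lower
bound `t` is what lets a sum be peeled at its smallest variable. -/
def gapChains (s r t N : ℕ) : Finset (Fin r → ℕ) :=
  (Fintype.piFinset fun _ => Icc t N).filter fun m => ∀ i j : Fin r, i < j → m i + s ≤ m j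

def chainSum (s N : ℕ) : List ℕ → ℕ → ℚ
  | [], _ => 1
  | a :: l, t => ∑ x ∈ Icc t N, 1 / (x : ℚ) ^ a * chainSum s N l (x + s)

lemma cons_mem_gapChains {s r t N x : ℕ} {m : Fin r → ℕ} :
    Fin.cons x m ∈ gapChains s (r + 1) t N ↔ x ∈ Icc t N ∧ m ∈ gapChains s r (x + s) N := by
  simp only [gapChains, mem_filter, Fintype.mem_piFinset, Fin.forall_fin_succ, Fin.cons_zero,
    Fin.cons_succ, mem_Icc, Fin.succ_pos, Fin.succ_lt_succ_iff,
    Fin.not_lt_zero, IsEmpty.forall_iff, forall_const, true_and]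
  constructor
  · rintro ⟨⟨hx, hm⟩, hxm, hmm⟩
    exact ⟨hx, fun i => ⟨hxm i, (hm i).2⟩, hmm⟩
  · rintro ⟨hx, hm, hmm⟩
    exact ⟨⟨hx, fun i => ⟨(hx.1.trans (Nat.le_add_right _ _)).trans (hm i).1, (hm i).2⟩⟩,
      fun i => (hm i).1, hmm⟩

lemma sum_gapChains_eq_chainSum (s N : ℕ) (l : List ℕ) (t : ℕ) :
    ∑ m ∈ gapChains s l.length t N, ∏ i, 1 / (m i : ℚ) ^ l.get i = chainSum s N l t := by
  induction l generalizing t with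
  | nil => simp [gapChains, chainSum]
  | cons a l ih =>
    simp_rw [chainSum, ← ih, mul_sum]
    rw [sum_sigma']
    refine sum_nbij' (fun m => ⟨m 0, Fin.tail m⟩) (fun p => Fin.cons p.1 p.2) ?_ ?_ ?_ ?_ ?_
    · intro m hm
      rw [← Fin.cons_self_tail m] at hm
      simpa using cons_mem_gapChains.mp hm
    · rintro ⟨x, m⟩ h
      simpa [cons_mem_gapChains] using h
    · intro m _; simp
    · rintro ⟨x, m⟩ _; simp
    · intro m _
      exact Fin.prod_univ_succ _

lemma zeta_eq_chainSum (N : ℕ) (l : List ℕ) : zeta N l = chainSum 1 N l 1 :=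
  sum_gapChains_eq_chainSum 1 N l 1

lemma zetaStar_eq_chainSum (N : ℕ) (l : List ℕ) : zetaStar N l = chainSum 0 N l 1 := by
  rw [← sum_gapChains_eq_chainSum, zetaStar, wchains, gapChains]
  congr 1
  refine filter_congr fun m _ => ⟨fun h i j hij => h i j hij.le, fun h i j hij => ?_⟩
  rcases hij.eq_or_lt with rfl | hlt
  exacts [le_rfl, h i j hlt]

lemma sum_Icc_sum_Icc_split {M : Type*} [AddCommMonoid M] (t N : ℕ) (F : ℕ → ℕ → M) :
    ∑ x ∈ Icc t N, ∑ y ∈ Icc t N, F x y =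
      ∑ x ∈ Icc t N, ∑ y ∈ Icc x N, F x y + ∑ y ∈ Icc t N, ∑ x ∈ Icc (y + 1) N, F x y := by
  have hsplit : ∀ x ∈ Icc t N,
      ∑ y ∈ Icc t N, F x y = ∑ y ∈ Icc x N, F x y + ∑ y ∈ Ico t x, F x y := by
    intro x hx
    rw [mem_Icc] at hx
    rw [← sum_union (disjoint_left.mpr fun y hy hy' => by simp at hy hy'; omega)]
    congr 1
    ext y
    simp only [mem_Icc, mem_union, mem_Ico]
    omega
  rw [sum_congr rfl hsplit, sum_add_distrib,
    sum_comm' (t := fun x => Ico t x) (t' := Icc t N) (s' := fun y => Icc (y + 1) N)]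
  intro x y
  simp only [mem_Icc, mem_Ico]
  omega

/- `V_j = valleySum N k_j [k_{j-1}, …, k_1] [k_{j+1}, …, k_r] 1`: the variable `x` carrying `a` lies
below the strict chain of `c` and starts the weak chain of `b`. -/
def valleySum (N a : ℕ) (c b : List ℕ) (t : ℕ) : ℚ :=
  ∑ x ∈ Icc t N, 1 / (x : ℚ) ^ a * chainSum 1 N c (x + 1) * chainSum 0 N b x

lemma chainSum_mul_chainSum (N a e : ℕ) (c b : List ℕ) (t : ℕ) :
    chainSum 1 N (a :: c) t * chainSum 0 N (e :: b) t =
      valleySum N a c (e :: b) t + valleySum N e (a :: c) b t := by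
  simp only [chainSum, valleySum, add_zero]
  rw [sum_mul_sum, sum_Icc_sum_Icc_split]
  simp only [mul_sum, sum_mul]
  congr 1
  refine sum_congr rfl fun _ _ => sum_congr rfl fun _ _ => by ring

lemma sum_range_alternating_cons (N e : ℕ) (p b : List ℕ) (t : ℕ) :
    ∑ j ∈ range ((e :: b).length + 1),
        (-1 : ℚ) ^ j * chainSum 1 N (((e :: b).take j).reverse ++ p) t *
          chainSum 0 N ((e :: b).drop j) t =
      chainSum 1 N p t * chainSum 0 N (e :: b) t -
        ∑ j ∈ range (b.length + 1),
          (-1 : ℚ) ^ j * chainSum 1 N ((b.take j).reverse ++ e :: p) t *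
            chainSum 0 N (b.drop j) t := by
  rw [List.length_cons, sum_range_succ', sub_eq_neg_add, ← sum_neg_distrib]
  simp [pow_succ]

lemma sum_range_alternating_eq_valleySum (N a : ℕ) (c b : List ℕ) (t : ℕ) :
    ∑ j ∈ range (b.length + 1),
        (-1 : ℚ) ^ j * chainSum 1 N ((b.take j).reverse ++ a :: c) t * chainSum 0 N (b.drop j) t =
      valleySum N a c b t := by
  induction b generalizing a c with
  | nil => simp [chainSum, valleySum]
  | cons e b ih =>
    rw [sum_range_alternating_cons, ih, chainSum_mul_chainSum, add_sub_cancel_right]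

theorem antipode_relation_general (N : ℕ) (k : List ℕ) (hk : k ≠ []) :
    ∑ j ∈ Finset.range (k.length + 1),
        (-1 : ℚ) ^ j * zeta N ((k.take j).reverse) * zetaStar N (k.drop j) = 0 := by
  obtain ⟨e, b, rfl⟩ := List.exists_cons_of_ne_nil hk
  have h := sum_range_alternating_cons N e [] b 1
  simp only [List.append_nil] at h
  simp only [zeta_eq_chainSum, zetaStar_eq_chainSum, h, sum_range_alternating_eq_valleySum]
  simp [chainSum, valleySum]

theorem antipode_relation (N : ℕ) (hN : 0 < N) (k : List ℕ) (hk : k ≠ [])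
    (hpos : ∀ x ∈ k, 0 < x) :
    ∑ j ∈ Finset.range (k.length + 1),
        (-1 : ℚ) ^ j * zeta N ((k.take j).reverse) * zetaStar N (k.drop j) = 0 :=
  antipode_relation_general N k hk
end

section
/- (Sum formula mod p) For integers k > r ≥ 1 and almost all primes p, the congruence ∑_{(k_1,...,k_r), k_1+...+k_r = k, all k_i ≥ 1} ∑_{1 ≤ m_1 < ... < m_r ≤ p-1} 1/(m_1^{k_1}···m_r^{k_r}) ≡ 0 (mod p) holds; likewise with non-strict inequalities m_1 ≤ ... ≤ m_r. -/
/-- `I_{k,r}`: tuples of positive integers of length `r` summing to `k`. -/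
def Iset (k r : ℕ) : Finset (Fin r → ℕ) :=
  (Fintype.piFinset fun _ => Finset.Icc 1 k).filter fun f => ∑ i, f i = k

/-- The multiple harmonic sum `ζ_N(k)` computed in `ℤ/Mℤ` (inverses mod `M`). -/
def zetaZ (M N : ℕ) {r : ℕ} (k : Fin r → ℕ) : ZMod M :=
  ∑ m ∈ schains r N, ∏ i, ((m i : ZMod M)⁻¹) ^ (k i)

/-- The star multiple harmonic sum `ζ_N^⋆(k)` computed in `ℤ/Mℤ` (inverses mod `M`). -/
def zetaStarZ (M N : ℕ) {r : ℕ} (k : Fin r → ℕ) : ZMod M :=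
  ∑ m ∈ wchains r N, ∏ i, ((m i : ZMod M)⁻¹) ^ (k i)

/-!
Swapping the two sums turns each side into `∑_m G(m)` over the chains `m`, where
`G(w) = ∑_{κ ∈ I_{k,r}} ∏ w_i^{-κ_i}` (`compositionSum`) is symmetric in `w` and homogeneous of
degree `-k`. Multiplying the entries of a chain by a unit `d` of `ℤ/pℤ` and re-sorting permutes
the chains, so the sum gets multiplied by `d^k`. For a generator `d` of `(ℤ/pℤ)ˣ`, `d^k ≠ 1`
because `0 < k < p - 1`, so the sum vanishes.
-/

open Finset

theorem Finset.sum_eq_zero_of_injOn_of_apply_eq_mul {ι R : Type*} [Ring R] [NoZeroDivisors R]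
    {s : Finset ι} {φ : ι → ι} {f : ι → R} {a : R} (ha : a ≠ 1) (hφ : Set.MapsTo φ s s)
    (hinj : Set.InjOn φ s) (hf : ∀ x ∈ s, f (φ x) = a * f x) : ∑ x ∈ s, f x = 0 := by
  have hperm : ∑ x ∈ s, f (φ x) = ∑ x ∈ s, f x :=
    sum_nbij φ hφ hinj (surjOn_of_injOn_of_card_le φ hφ hinj le_rfl) fun _ _ => rfl
  have hfix : (a - 1) * ∑ x ∈ s, f x = 0 := by
    rw [sub_mul, one_mul, mul_sum, ← sum_congr rfl hf, hperm, sub_self]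
  exact (mul_eq_zero.1 hfix).resolve_left (sub_ne_zero.2 ha)

theorem IsCyclic.exists_pow_ne_one {G : Type*} [Group G] [IsCyclic G] {k : ℕ} (hk0 : k ≠ 0)
    (hk : k < Nat.card G) : ∃ g : G, g ^ k ≠ 1 := by
  obtain ⟨g, hg⟩ := IsCyclic.exists_ofOrder_eq_natCard (α := G)
  exact ⟨g, pow_ne_one_of_lt_orderOf hk0 (hg ▸ hk)⟩

section SortMap

variable {α β : Type*} [LinearOrder β] {n : ℕ}

def sortMap (f : α → β) (m : Fin n → α) : Fin n → β :=
  (f ∘ m) ∘ Tuple.sort (f ∘ m)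

theorem monotone_sortMap (f : α → β) (m : Fin n → α) : Monotone (sortMap f m) :=
  Tuple.monotone_sort _

theorem injective_sortMap {f : α → β} {m : Fin n → α} (h : Function.Injective (f ∘ m)) :
    Function.Injective (sortMap f m) :=
  h.comp (Equiv.injective _)

theorem sortMap_sortMap_of_leftInverse [LinearOrder α] {f : α → β} {g : β → α} {m : Fin n → α}
    (hm : Monotone m) (hgf : g ∘ f ∘ m = m) : sortMap g (sortMap f m) = m := by
  simp only [sortMap]
  rw [← Function.comp_assoc g, ← Function.comp_assoc, Function.comp_assoc g, hgf,
    Tuple.comp_perm_comp_sort_eq_comp_sort, Tuple.sort_eq_refl_iff_monotone.2 hm]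
  rfl

end SortMap

section MulVal

variable {p : ℕ}

def mulVal (d : (ZMod p)ˣ) (x : ℕ) : ℕ :=
  ((d : ZMod p) * x).val

variable [NeZero p]

theorem natCast_mulVal (d : (ZMod p)ˣ) (x : ℕ) : (mulVal d x : ZMod p) = d * x :=
  ZMod.natCast_zmod_val _

theorem mulVal_inv_mulVal (d : (ZMod p)ˣ) {x : ℕ} (hx : x < p) : mulVal d⁻¹ (mulVal d x) = x := by
  rw [mulVal, natCast_mulVal, ← mul_assoc, Units.inv_mul, one_mul, ZMod.val_cast_of_lt hx]

theorem mulVal_mem_Icc (d : (ZMod p)ˣ) {x : ℕ} (hx : x ∈ Icc 1 (p - 1)) :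
    mulVal d x ∈ Icc 1 (p - 1) := by
  obtain ⟨hx1, hxp⟩ := mem_Icc.1 hx
  have hx0 : (x : ZMod p) ≠ 0 := by
    rw [Ne, ZMod.natCast_eq_zero_iff]
    exact Nat.not_dvd_of_pos_of_lt hx1 (by omega)
  have h0 : mulVal d x ≠ 0 := by
    rw [mulVal, Ne, ZMod.val_eq_zero, Units.mul_right_eq_zero]
    exact hx0
  have hlt : mulVal d x < p := ZMod.val_lt _
  exact mem_Icc.2 ⟨by omega, by omega⟩

end MulVal

section Chains

variable {r N : ℕ} {m : Fin r → ℕ}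

theorem mem_wchains : m ∈ wchains r N ↔ (∀ i, m i ∈ Icc 1 N) ∧ Monotone m := by
  simp only [wchains, mem_filter, Fintype.mem_piFinset]
  rfl

theorem mem_schains : m ∈ schains r N ↔ (∀ i, m i ∈ Icc 1 N) ∧ StrictMono m := by
  simp only [schains, mem_filter, Fintype.mem_piFinset]
  rfl

theorem schains_subset_wchains : schains r N ⊆ wchains r N := fun _ hm =>
  let ⟨hrange, hmono⟩ := mem_schains.1 hm
  mem_wchains.2 ⟨hrange, hmono.monotone⟩

variable {p : ℕ} [NeZero p]

theorem mulVal_inv_comp_mulVal_comp (d : (ZMod p)ˣ) (hm : m ∈ wchains r (p - 1)) :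
    mulVal d⁻¹ ∘ mulVal d ∘ m = m := by
  funext i
  have := mem_Icc.1 ((mem_wchains.1 hm).1 i)
  exact mulVal_inv_mulVal d (by omega)

theorem sortMap_mulVal_mem_wchains (d : (ZMod p)ˣ) (hm : m ∈ wchains r (p - 1)) :
    sortMap (mulVal d) m ∈ wchains r (p - 1) :=
  mem_wchains.2 ⟨fun _ => mulVal_mem_Icc d ((mem_wchains.1 hm).1 _), monotone_sortMap _ _⟩

theorem sortMap_mulVal_mem_schains (d : (ZMod p)ˣ) (hm : m ∈ schains r (p - 1)) :
    sortMap (mulVal d) m ∈ schains r (p - 1) := by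
  have hinj : Function.Injective (mulVal d ∘ m) := by
    refine Function.Injective.of_comp (f := mulVal d⁻¹) ?_
    rw [mulVal_inv_comp_mulVal_comp d (schains_subset_wchains hm)]
    exact (mem_schains.1 hm).2.injective
  exact mem_schains.2 ⟨fun _ => mulVal_mem_Icc d ((mem_schains.1 hm).1 _),
    (monotone_sortMap _ _).strictMono_of_injective (injective_sortMap hinj)⟩

end Chains

section CompositionSum

variable {K : Type*} [Field K] (k : ℕ) {r : ℕ}

def compositionSum (w : Fin r → K) : K :=
  ∑ kk ∈ Iset k r, ∏ i, (w i)⁻¹ ^ kk i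

theorem comp_perm_mem_Iset {kk : Fin r → ℕ} (σ : Equiv.Perm (Fin r)) :
    kk ∘ σ ∈ Iset k r ↔ kk ∈ Iset k r := by
  simp only [Iset, mem_filter, Fintype.mem_piFinset, Function.comp_apply, Equiv.sum_comp σ kk,
    σ.forall_congr_right (q := fun i => kk i ∈ Icc 1 k)]

theorem compositionSum_comp_perm (w : Fin r → K) (σ : Equiv.Perm (Fin r)) :
    compositionSum k (w ∘ σ) = compositionSum k w := by
  refine sum_nbij' (· ∘ σ.symm) (· ∘ σ) (fun kk hkk => ?_) (fun kk hkk => ?_)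
    (fun kk _ => by simp [Function.comp_assoc]) (fun kk _ => by simp [Function.comp_assoc])
    (fun kk _ => ?_)
  · rwa [← comp_perm_mem_Iset k σ, Function.comp_assoc, σ.symm_comp_self]
  · rwa [comp_perm_mem_Iset]
  · exact Fintype.prod_equiv σ _ _ fun i => by simp

theorem compositionSum_mul_left (d : K) (w : Fin r → K) :
    compositionSum k (fun i => d * w i) = d⁻¹ ^ k * compositionSum k w := by
  rw [compositionSum, compositionSum, mul_sum]
  refine sum_congr rfl fun kk hkk => ?_
  have hsum : ∑ i, kk i = k := (mem_filter.1 hkk).2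
  simp only [mul_inv, mul_pow, prod_mul_distrib, prod_pow_eq_pow_sum, hsum]

theorem compositionSum_sortMap_mulVal {p : ℕ} [Fact p.Prime] (d : (ZMod p)ˣ) (m : Fin r → ℕ) :
    compositionSum k (fun i => ((sortMap (mulVal d) m i : ℕ) : ZMod p)) =
      (d : ZMod p)⁻¹ ^ k * compositionSum k (fun i => (m i : ZMod p)) := by
  have hcast : (fun i => ((sortMap (mulVal d) m i : ℕ) : ZMod p)) =
      (fun i => (d : ZMod p) * m i) ∘ Tuple.sort (mulVal d ∘ m) :=
    funext fun _ => natCast_mulVal _ _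
  rw [hcast, compositionSum_comp_perm, compositionSum_mul_left]

end CompositionSum

theorem sum_compositionSum_eq_zero {p k r : ℕ} [Fact p.Prime] (hk0 : k ≠ 0)
    (hkp : k < p - 1) {F : Finset (Fin r → ℕ)} (hFw : F ⊆ wchains r (p - 1))
    (hF : ∀ d : (ZMod p)ˣ, ∀ m ∈ F, sortMap (mulVal d) m ∈ F) :
    ∑ m ∈ F, compositionSum k (fun i => (m i : ZMod p)) = 0 := by
  obtain ⟨d, hd⟩ := IsCyclic.exists_pow_ne_one (G := (ZMod p)ˣ) hk0
    (by rwa [Nat.card_eq_fintype_card, ZMod.card_units])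
  refine sum_eq_zero_of_injOn_of_apply_eq_mul (φ := sortMap (mulVal d⁻¹)) (a := (d : ZMod p) ^ k)
    ?_ (fun m hm => hF _ m hm) ?_ fun m _ => ?_
  · rwa [← Units.val_pow_eq_pow_val, Ne, Units.val_eq_one]
  · refine Set.LeftInvOn.injOn (f₁' := sortMap (mulVal d)) fun m hm => ?_
    have hmw := hFw hm
    exact sortMap_sortMap_of_leftInverse (mem_wchains.1 hmw).2
      (by simpa using mulVal_inv_comp_mulVal_comp d⁻¹ hmw)
  · rw [compositionSum_sortMap_mulVal, Units.val_inv_eq_inv_val, inv_inv]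

theorem sum_formula_mod_p_general (k r : ℕ) (hrk : r < k) :
    ∃ P : ℕ, ∀ p : ℕ, p.Prime → P < p →
      (∑ kk ∈ Iset k r, zetaZ p (p - 1) kk) = 0 ∧
      (∑ kk ∈ Iset k r, zetaStarZ p (p - 1) kk) = 0 := by
  refine ⟨k + 1, fun p hp hkP => ?_⟩
  have := Fact.mk hp
  have hk0 : k ≠ 0 := by omega
  have hk : k < p - 1 := by omega
  exact ⟨sum_comm.trans <| sum_compositionSum_eq_zero hk0 hk schains_subset_wchains
      fun d _ => sortMap_mulVal_mem_schains d,
    sum_comm.trans <| sum_compositionSum_eq_zero hk0 hk subset_rfl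
      fun d _ => sortMap_mulVal_mem_wchains d⟩

theorem sum_formula_mod_p (k r : ℕ) (hr : 1 ≤ r) (hrk : r < k) :
    ∃ P : ℕ, ∀ p : ℕ, p.Prime → P < p →
      (∑ kk ∈ Iset k r, zetaZ p (p - 1) kk) = 0 ∧
      (∑ kk ∈ Iset k r, zetaStarZ p (p - 1) kk) = 0 :=
  sum_formula_mod_p_general k r hrk
end
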